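/- arXiv:2112.07980 — 2 statements merged into one kernel-verified Lean document; each statement's English description precedes it below -/
import Mathlib

section
/- Let f : Finset E → ℝ≥0 be a monotone submodular set function with f(∅) = 0 on a finite ground set E, and suppose we select a set of size k greedily (at each step adding an element with maximal marginal gain). Then the greedy solution S satisfies f(S) ≥ (1 - 1/e)·max{f(T) : |T| ≤ k}. -/
theorem greedy_submodular_guarantee {E : Type*} [Fintype E] [DecidableEq E]
    (f : Finset E → NNReal)
    (hmono : ∀ A B : Finset E, A ⊆ B → f A ≤ f B)
    (hsub : ∀ A B : Finset E, f (A ∪ B) + f (A ∩ B) ≤ f A + f B)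
    (hempty : f ∅ = 0)
    (k : ℕ) (S : ℕ → Finset E) (hS0 : S 0 = ∅)
    (hstep : ∀ n < k, ∃ e, e ∉ S n ∧ S (n + 1) = insert e (S n) ∧
      ∀ x : E, f (insert x (S n)) ≤ f (insert e (S n)))
    (T : Finset E) (hT : T.card ≤ k) :
    (1 - 1 / Real.exp 1) * (f T : ℝ) ≤ (f (S k) : ℝ) := by
  rcases Nat.eq_zero_or_pos k with hk | hk
  · subst hk
    have hTe : T = ∅ := Finset.card_eq_zero.mp (le_antisymm hT (Nat.zero_le _))
    subst hTe
    rw [hempty]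
    simp
  have hk' : (0:ℝ) < k := by exact_mod_cast hk
  have hr : (0:ℝ) ≤ 1 - 1/k := by
    rw [sub_nonneg, div_le_one hk']
    exact_mod_cast hk
  -- key submodularity lemma
  have key : ∀ B A : Finset E, (f (A ∪ B) : ℝ) ≤ f A + ∑ e ∈ B, ((f (insert e A) : ℝ) - f A) := by
    intro B
    induction B using Finset.induction_on with
    | empty => intro A; simp
    | @insert e B he ih =>
      intro A
      have hsub' := hsub (insert e A) (A ∪ B)
      have hu : insert e A ∪ (A ∪ B) = insert e (A ∪ B) := by
        ext x; simp
      have hA : (f A : ℝ) ≤ f ((insert e A) ∩ (A ∪ B)) := by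
        exact_mod_cast hmono _ _ (Finset.subset_inter (Finset.subset_insert _ _)
          Finset.subset_union_left)
      have h2 : A ∪ insert e B = insert e (A ∪ B) := by
        ext x; simp
      have hsubR : (f (insert e (A ∪ B)) : ℝ) + f ((insert e A) ∩ (A ∪ B))
          ≤ f (insert e A) + f (A ∪ B) := by
        rw [← hu]; exact_mod_cast hsub'
      have hih := ih A
      rw [h2, Finset.sum_insert he]
      linarith
  -- one-step contraction
  have step : ∀ n < k, (f T : ℝ) - f (S (n+1)) ≤ (1 - 1/(k:ℝ)) * ((f T : ℝ) - f (S n)) := by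
    intro n hn
    obtain ⟨e, he, hSn1, hmax⟩ := hstep n hn
    have hmono' : (f (S n) : ℝ) ≤ f (S (n+1)) := by
      rw [hSn1]; exact_mod_cast hmono _ _ (Finset.subset_insert _ _)
    have hbound : (f T : ℝ) ≤ f (S n) + T.card * ((f (S (n+1)) : ℝ) - f (S n)) := by
      have h1 : (f T : ℝ) ≤ f (S n ∪ T) := by
        exact_mod_cast hmono _ _ Finset.subset_union_right
      have h2 := key T (S n)
      have h3 : ∑ e' ∈ T, ((f (insert e' (S n)) : ℝ) - f (S n))
          ≤ T.card * ((f (S (n+1)) : ℝ) - f (S n)) := by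
        calc ∑ e' ∈ T, ((f (insert e' (S n)) : ℝ) - f (S n))
            ≤ ∑ _e' ∈ T, ((f (S (n+1)) : ℝ) - f (S n)) := by
              apply Finset.sum_le_sum
              intro x hx
              have hx' := hmax x
              rw [hSn1]
              exact sub_le_sub_right (by exact_mod_cast hx') _
          _ = T.card * ((f (S (n+1)) : ℝ) - f (S n)) := by
              rw [Finset.sum_const, nsmul_eq_mul]
      linarith
    have hcard : (T.card : ℝ) ≤ k := by exact_mod_cast hT
    have hgain : (0:ℝ) ≤ (f (S (n+1)) : ℝ) - f (S n) := by linarith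
    have hbound2 : (f T : ℝ) ≤ f (S n) + k * ((f (S (n+1)) : ℝ) - f (S n)) := by
      nlinarith
    have heq : (1 - 1/(k:ℝ)) = ((k:ℝ) - 1)/k := by field_simp
    rw [heq, div_mul_eq_mul_div, le_div_iff₀ hk']
    nlinarith
  -- iterate
  have main : ∀ n ≤ k, (f T : ℝ) - f (S n) ≤ (1 - 1/(k:ℝ))^n * f T := by
    intro n
    induction n with
    | zero => intro _; simp [hS0, hempty]
    | succ n ih =>
      intro hn
      have hn' : n < k := hn
      have h1 := step n hn'
      have h2 := ih (le_of_lt hn')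
      calc (f T : ℝ) - f (S (n+1)) ≤ (1 - 1/(k:ℝ)) * ((f T : ℝ) - f (S n)) := h1
        _ ≤ (1 - 1/(k:ℝ)) * ((1 - 1/(k:ℝ))^n * f T) := mul_le_mul_of_nonneg_left h2 hr
        _ = (1 - 1/(k:ℝ))^(n+1) * f T := by ring
  have hfinal := main k le_rfl
  have hexp : (1 - 1/(k:ℝ))^k ≤ 1 / Real.exp 1 := by
    have h1 : (1 - 1/(k:ℝ)) ≤ Real.exp (-(1/k)) := by
      have := Real.add_one_le_exp (-(1/(k:ℝ)))
      linarith
    calc (1 - 1/(k:ℝ))^k ≤ (Real.exp (-(1/k)))^k := pow_le_pow_left₀ hr h1 k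
      _ = Real.exp (-1) := by
          rw [← Real.exp_nat_mul]; congr 1; field_simp
      _ = 1 / Real.exp 1 := by rw [Real.exp_neg, one_div]
  have hfT : (0:ℝ) ≤ f T := (f T).coe_nonneg
  have := mul_le_mul_of_nonneg_right hexp hfT
  nlinarith
end

section
/- Let v1 > v2 > 0 be transfer speeds and m1 < m2 be per-unit total monetary rates of two storage types, s > 0 the data size, D > 0 a deadline with s/v1 ≤ D < s/v2, and B > 0 a budget with s·m1 > B ≥ s·m2. Then there exists p ∈ [0,1] such that the split placement (fraction p on type 1, 1-p on type 2) satisfies both p·s/v1 + (1-p)·s/v2 ≤ D and p·s·m1 + (1-p)·s·m2 ≤ B if and only if (s/v2 - D)·v1·v2/(s·(v1 - v2)) ≤ (B - s·m2)/(s·(m1 - m2)). -/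
theorem split_feasibility_iff (s v1 v2 m1 m2 D B : ℝ)
    (hv : v1 > v2) (hv2 : 0 < v2) (hm : m1 > m2) (hs : 0 < s)
    (hD0 : 0 < D) (hD1 : s / v1 ≤ D) (hD2 : D < s / v2)
    (hB0 : 0 < B) (hB1 : s * m1 > B) (hB2 : s * m2 ≤ B) :
    (∃ p : ℝ, 0 ≤ p ∧ p ≤ 1 ∧
        p * s / v1 + (1 - p) * s / v2 ≤ D ∧
        p * s * m1 + (1 - p) * s * m2 ≤ B)
    ↔ (s / v2 - D) * v1 * v2 / (s * (v1 - v2)) ≤ (B - s * m2) / (s * (m1 - m2)) := by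
  have hv1 : 0 < v1 := lt_trans hv2 hv
  have hA : 0 < s * (v1 - v2) := mul_pos hs (sub_pos.2 hv)
  have hM : 0 < s * (m1 - m2) := mul_pos hs (sub_pos.2 hm)
  set pmin := (s / v2 - D) * v1 * v2 / (s * (v1 - v2)) with hpmin
  set pmax := (B - s * m2) / (s * (m1 - m2)) with hpmax
  have hnum : (s / v2 - D) * v1 * v2 = s * v1 - D * (v1 * v2) := by
    field_simp
  have hsD : s ≤ D * v1 := (div_le_iff₀ hv1).1 hD1
  have hsD2 : D * v2 < s := by
    have := (lt_div_iff₀ hv2).1 hD2; linarith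
  have htime : ∀ p : ℝ, (p * s / v1 + (1 - p) * s / v2 ≤ D ↔ pmin ≤ p) := by
    intro p
    rw [hpmin, div_le_iff₀ hA, hnum,
      div_add_div _ _ (ne_of_gt hv1) (ne_of_gt hv2), div_le_iff₀ (mul_pos hv1 hv2)]
    constructor <;> intro h <;> nlinarith
  have hmoney : ∀ p : ℝ, (p * s * m1 + (1 - p) * s * m2 ≤ B ↔ p ≤ pmax) := by
    intro p
    rw [hpmax, le_div_iff₀ hM]
    constructor <;> intro h <;> nlinarith
  have hpmin_pos : 0 < pmin := by
    apply div_pos _ hA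
    rw [hnum]; nlinarith
  have hpmin_le1 : pmin ≤ 1 := by
    rw [hpmin, div_le_one hA, hnum]; nlinarith
  constructor
  · rintro ⟨p, hp0, hp1, ht, hmo⟩
    exact le_trans ((htime p).1 ht) ((hmoney p).1 hmo)
  · intro h
    exact ⟨pmin, le_of_lt hpmin_pos, hpmin_le1, (htime pmin).2 le_rfl, (hmoney pmin).2 h⟩
end
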